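/- Let X be a metric space, Y ⊆ X with Borel partition {Z_y} (Z_y ⊆ B_r(y)), and let f : X → B be a bounded function into a C*-algebra with ‖grad‖-type Lipschitz bound: ‖f(x) − f(x')‖ ≤ L·d(x,x'). Let T be a bounded operator on ℓ²-sections over X with propagation ≤ p (i.e. χ_y T χ_z = 0 when d(y,z) > p + 2r for the indicator functions χ_y of Z_y), and suppose #(Y ∩ B_{2r+p}(x)) ≤ K for all x. Then the graded commutator satisfies ‖[T, f_r]‖ ≤ K·‖T‖·L·(2r + p), where f_r := Σ_{y} f(y)χ_y. -/

import Mathlib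

/-!
Compressing the graded commutator `D = T F_r - σ F_r T` by the projections gives the blocks
`χ_y D χ_z = χ_y T χ_z (M_z - M_y)`, the sign cancelling because `σ² = 1`. By finite propagation
these vanish unless `dist (pt y) (pt z) ≤ p + 2r`, and then their norm is at most
`c = ‖T‖ L (2r + p)`. A Schur test for block operators with at most `K` nonzero blocks in each row
and column finishes: with `R_y` the `z` within `p + 2r` of `y`, Cauchy–Schwarz gives
`‖χ_y D v‖² ≤ K c² ∑_{z ∈ R_y} ‖χ_z v‖²`, and summing over `y` counts every `z` at most `K` times,
so `‖D v‖² = ∑_y ‖χ_y D v‖² ≤ K² c² ‖v‖²`.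
-/

open ContinuousLinearMap Finset

theorem Finset.sum_sum_le_mul_sum_biUnion {ι : Type*} [DecidableEq ι] {R : ι → Finset ι}
    (hsymm : ∀ y z, z ∈ R y ↔ y ∈ R z) {K : ℕ} (hcard : ∀ y, #(R y) ≤ K)
    {g : ι → ℝ} (hg : ∀ z, 0 ≤ g z) (S : Finset ι) :
    ∑ y ∈ S, ∑ z ∈ R y, g z ≤ K * ∑ z ∈ S.biUnion R, g z := by
  rw [sum_comm' (t' := S.biUnion R) (s' := fun z => (R z).filter (· ∈ S))
    (fun y z => by simp only [mem_filter, mem_biUnion]; grind), mul_sum]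
  refine sum_le_sum fun z _ => ?_
  rw [sum_const, nsmul_eq_mul]
  gcongr
  · exact hg z
  · exact_mod_cast (card_filter_le _ _).trans (hcard z)

theorem IsIdempotentElem.apply_apply {R M : Type*} [Semiring R] [TopologicalSpace M]
    [AddCommMonoid M] [Module R M] {P : M →L[R] M} (hP : IsIdempotentElem P) (u : M) :
    P (P u) = P u :=
  DFunLike.congr_fun hP.eq u

theorem IsStarProjection.norm_mul_mul_le {E : Type*} [NonUnitalNormedRing E] [StarRing E]
    [CStarRing E] {p q : E} (hp : IsStarProjection p) (hq : IsStarProjection q) (a : E) :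
    ‖p * a * q‖ ≤ ‖a‖ :=
  calc ‖p * a * q‖ ≤ ‖p‖ * ‖a‖ * ‖q‖ := norm_mul₃_le
    _ ≤ 1 * ‖a‖ * 1 := by gcongr <;> exact IsStarProjection.norm_le _ ‹_›
    _ = ‖a‖ := by ring

section Projections

variable {H : Type*} [NormedAddCommGroup H] [InnerProductSpace ℂ H]
  {ι : Type*} {χ : ι → H →L[ℂ] H}

theorem hasSum_norm_sq_of_hasSum_proj [CompleteSpace H] (hχ : ∀ y, IsStarProjection (χ y))
    {u : H} (hu : HasSum (fun y => χ y u) u) :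
    HasSum (fun y => ‖χ y u‖ ^ 2) (‖u‖ ^ 2) := by
  have hself : ∀ y, inner ℂ u (χ y u) = inner ℂ (χ y u) (χ y u) := fun y =>
    calc inner ℂ u (χ y u) = inner ℂ u (χ y (χ y u)) := by
          rw [(hχ y).isIdempotentElem.apply_apply]
      _ = inner ℂ (χ y u) (χ y u) := ((hχ y).isSelfAdjoint.isSymmetric u (χ y u)).symm
  simpa [hself, ← inner_self_eq_norm_sq (𝕜 := ℂ)] using Complex.hasSum_re (hu.mapL (innerSL ℂ u))

section BlockBound

variable {D : H →L[ℂ] H} {R : ι → Finset ι}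

theorem proj_apply_eq_sum_blocks (hcomplete : ∀ v : H, HasSum (fun z => χ z v) v)
    (hzero : ∀ y, ∀ z ∉ R y, χ y ∘L D ∘L χ z = 0) (y : ι) (v : H) :
    χ y (D v) = ∑ z ∈ R y, (χ y ∘L D ∘L χ z) v :=
  ((hcomplete v).mapL (χ y ∘L D)).unique <|
    hasSum_sum_of_ne_finset_zero fun z hz => DFunLike.congr_fun (hzero y z hz) v

theorem norm_proj_apply_sq_le (hidem : ∀ y, IsIdempotentElem (χ y))
    (hcomplete : ∀ v : H, HasSum (fun z => χ z v) v) {K : ℕ} (hcard : ∀ y, #(R y) ≤ K)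
    (hzero : ∀ y, ∀ z ∉ R y, χ y ∘L D ∘L χ z = 0) {c : ℝ}
    (hblock : ∀ y, ∀ z ∈ R y, ‖χ y ∘L D ∘L χ z‖ ≤ c) (y : ι) (v : H) :
    ‖χ y (D v)‖ ^ 2 ≤ K * c ^ 2 * ∑ z ∈ R y, ‖χ z v‖ ^ 2 := by
  have hrow : ‖χ y (D v)‖ ≤ c * ∑ z ∈ R y, ‖χ z v‖ := by
    rw [proj_apply_eq_sum_blocks hcomplete hzero, mul_sum]
    refine norm_sum_le_of_le _ fun z hz => ?_
    have hvz : (χ y ∘L D ∘L χ z) v = (χ y ∘L D ∘L χ z) (χ z v) := by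
      simp only [comp_apply, (hidem z).apply_apply]
    rw [hvz]
    exact (χ y ∘L D ∘L χ z).le_of_opNorm_le (hblock y z hz) _
  calc ‖χ y (D v)‖ ^ 2 ≤ (c * ∑ z ∈ R y, ‖χ z v‖) ^ 2 := by gcongr
    _ = c ^ 2 * (∑ z ∈ R y, ‖χ z v‖) ^ 2 := by ring
    _ ≤ c ^ 2 * (#(R y) * ∑ z ∈ R y, ‖χ z v‖ ^ 2) := by
      gcongr; exact sq_sum_le_card_mul_sum_sq
    _ ≤ K * c ^ 2 * ∑ z ∈ R y, ‖χ z v‖ ^ 2 := by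
      rw [← mul_assoc, mul_comm (c ^ 2)]; gcongr; exact_mod_cast hcard y

theorem opNorm_le_of_block_opNorm_le [CompleteSpace H] (hχ : ∀ y, IsStarProjection (χ y))
    (hcomplete : ∀ v : H, HasSum (fun z => χ z v) v)
    (hsymm : ∀ y z, z ∈ R y ↔ y ∈ R z) {K : ℕ} (hcard : ∀ y, #(R y) ≤ K)
    (hzero : ∀ y, ∀ z ∉ R y, χ y ∘L D ∘L χ z = 0) {c : ℝ} (hc : 0 ≤ c)
    (hblock : ∀ y, ∀ z ∈ R y, ‖χ y ∘L D ∘L χ z‖ ≤ c) :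
    ‖D‖ ≤ K * c := by
  classical
  refine D.opNorm_le_bound (by positivity) fun v => ?_
  have hbessel (S : Finset ι) : ∑ z ∈ S, ‖χ z v‖ ^ 2 ≤ ‖v‖ ^ 2 :=
    sum_le_hasSum S (fun _ _ => by positivity) (hasSum_norm_sq_of_hasSum_proj hχ (hcomplete v))
  have hsq : ‖D v‖ ^ 2 ≤ (K * c * ‖v‖) ^ 2 := by
    refine hasSum_le_of_sum_le (hasSum_norm_sq_of_hasSum_proj hχ (hcomplete (D v))) fun S => ?_
    calc ∑ y ∈ S, ‖χ y (D v)‖ ^ 2 ≤ ∑ y ∈ S, K * c ^ 2 * ∑ z ∈ R y, ‖χ z v‖ ^ 2 :=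
          sum_le_sum fun y _ => norm_proj_apply_sq_le (fun y => (hχ y).isIdempotentElem)
            hcomplete hcard hzero hblock y v
      _ = K * c ^ 2 * ∑ y ∈ S, ∑ z ∈ R y, ‖χ z v‖ ^ 2 := (mul_sum _ _ _).symm
      _ ≤ K * c ^ 2 * (K * ∑ z ∈ S.biUnion R, ‖χ z v‖ ^ 2) := by
          gcongr; exact sum_sum_le_mul_sum_biUnion hsymm hcard (fun _ => by positivity) S
      _ ≤ K * c ^ 2 * (K * ‖v‖ ^ 2) := by gcongr; exact hbessel _
      _ = (K * c * ‖v‖) ^ 2 := by ring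
  exact (pow_le_pow_iff_left₀ (norm_nonneg _) (by positivity) two_ne_zero).1 hsq

end BlockBound

section Diagonal

variable {M : ι → H →L[ℂ] H} {F : H →L[ℂ] H}

theorem diag_comp_proj (hidem : ∀ y, IsIdempotentElem (χ y))
    (horth : ∀ y z, y ≠ z → χ y ∘L χ z = 0)
    (hF : ∀ v, HasSum (fun y => M y (χ y v)) (F v)) (z : ι) :
    F ∘L χ z = M z ∘L χ z := by
  ext v
  refine (hF (χ z v)).unique ?_
  convert hasSum_single z fun y hyz => ?_ using 1
  · simp only [comp_apply, (hidem z).apply_apply]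
  · rw [← comp_apply (χ y), horth y z hyz, zero_apply, map_zero]

theorem proj_comp_diag (hidem : ∀ y, IsIdempotentElem (χ y))
    (horth : ∀ y z, y ≠ z → χ y ∘L χ z = 0) (hMχ : ∀ y z, M y ∘L χ z = χ z ∘L M y)
    (hF : ∀ v, HasSum (fun y => M y (χ y v)) (F v)) (y : ι) :
    χ y ∘L F = M y ∘L χ y := by
  ext v
  have hcomm (x : ι) (w : H) : M x (χ y w) = χ y (M x w) := DFunLike.congr_fun (hMχ x y) w
  refine ((hF v).mapL (χ y)).unique ?_
  convert hasSum_single y fun x hxy => ?_ using 1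
  · simp only [comp_apply, ← hcomm, (hidem y).apply_apply]
  · rw [← hcomm, ← comp_apply (χ y), horth y x hxy.symm, zero_apply, map_zero]

theorem proj_comp_gradedComm_comp_proj (hidem : ∀ y, IsIdempotentElem (χ y))
    (horth : ∀ y z, y ≠ z → χ y ∘L χ z = 0) (hMχ : ∀ y z, M y ∘L χ z = χ z ∘L M y)
    (hF : ∀ v, HasSum (fun y => M y (χ y v)) (F v)) {σ : ℂ} (hσ : σ * σ = 1)
    {T : H →L[ℂ] H} (hTM : ∀ y, M y ∘L T = σ • (T ∘L M y)) (y z : ι) :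
    χ y ∘L (T ∘L F - σ • (F ∘L T)) ∘L χ z = (χ y ∘L T ∘L χ z) ∘L (M z - M y) := by
  ext v
  have hFχ := DFunLike.congr_fun (diag_comp_proj hidem horth hF z)
  have hχF := DFunLike.congr_fun (proj_comp_diag hidem horth hMχ hF y)
  have hMχ' (x w : ι) := DFunLike.congr_fun (hMχ x w)
  have hTM' := DFunLike.congr_fun (hTM y)
  simp only [comp_apply, sub_apply, smul_apply] at hFχ hχF hMχ' hTM' ⊢
  rw [map_sub, map_sub, hFχ, map_smul, hχF, hMχ' y y, hTM', map_smul, smul_smul, hσ,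
    one_smul, ← hMχ' z z, ← hMχ' y z, map_sub, map_sub]

end Diagonal

end Projections

theorem finite_propagation_commutator_estimate_general
    {H : Type*} [NormedAddCommGroup H] [InnerProductSpace ℂ H] [CompleteSpace H]
    {ι X : Type*} [MetricSpace X] (pt : ι → X)
    (χ : ι → H →L[ℂ] H)
    (hproj : ∀ y, IsIdempotentElem (χ y) ∧ IsSelfAdjoint (χ y))
    (horth : ∀ y z, y ≠ z → (χ y) ∘L (χ z) = 0)
    (hcomplete : ∀ v : H, HasSum (fun y => χ y v) v)
    (M : ι → H →L[ℂ] H)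
    (L r p : ℝ) (hL : 0 ≤ L) (hr : 0 < r) (hp : 0 ≤ p)
    (hLip : ∀ y z, ‖M y - M z‖ ≤ L * dist (pt y) (pt z))
    (σ : ℂ) (hσ : σ = 1 ∨ σ = -1)
    (T : H →L[ℂ] H)
    (hTM : ∀ y, (M y) ∘L T = σ • (T ∘L (M y)))
    (hMχ : ∀ y z, (M y) ∘L (χ z) = (χ z) ∘L (M y))
    (hprop : ∀ y z, p + 2 * r < dist (pt y) (pt z) → (χ y) ∘L T ∘L (χ z) = 0)
    (K : ℕ)
    (hmul : ∀ y : ι, Set.Finite {z : ι | dist (pt y) (pt z) ≤ p + 2 * r} ∧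
      Nat.card {z : ι | dist (pt y) (pt z) ≤ p + 2 * r} ≤ K)
    (Fr : H →L[ℂ] H)
    (hFr : ∀ v : H, HasSum (fun y => (M y) ((χ y) v)) (Fr v)) :
    ‖T ∘L Fr - σ • (Fr ∘L T)‖ ≤ (K : ℝ) * ‖T‖ * L * (2 * r + p) := by
  have hχ (y : ι) : IsStarProjection (χ y) := ⟨(hproj y).1, (hproj y).2⟩
  let R (y : ι) : Finset ι := (hmul y).1.toFinset
  have hR (y z : ι) : z ∈ R y ↔ dist (pt y) (pt z) ≤ p + 2 * r := Set.Finite.mem_toFinset _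
  have hblocks := proj_comp_gradedComm_comp_proj (fun y => (hproj y).1) horth hMχ hFr
    (by rcases hσ with rfl | rfl <;> norm_num) hTM
  refine (opNorm_le_of_block_opNorm_le hχ hcomplete (R := R) (c := ‖T‖ * L * (2 * r + p))
    (fun y z => by rw [hR, hR, dist_comm]) (fun y => ?card) (fun y z hz => ?far)
    (mul_nonneg (mul_nonneg (norm_nonneg T) hL) (by linarith)) (fun y z hz => ?near)).trans_eq
    (by ring)
  case card => exact (Nat.card_eq_card_finite_toFinset _).symm.trans_le (hmul y).2
  case far => rw [hblocks, hprop y z (not_le.1 (mt (hR y z).2 hz)), zero_comp]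
  case near =>
    rw [hblocks]
    calc ‖(χ y ∘L T ∘L χ z) ∘L (M z - M y)‖ ≤ ‖χ y ∘L T ∘L χ z‖ * ‖M z - M y‖ :=
          opNorm_comp_le _ _
      _ ≤ ‖T‖ * (L * (p + 2 * r)) := by
        gcongr
        · exact (hχ y).norm_mul_mul_le (hχ z) T
        · exact (hLip z y).trans (by rw [dist_comm]; gcongr; exact (hR y z).1 hz)
      _ = ‖T‖ * L * (2 * r + p) := by ring

/-- Commutator estimate for finite-propagation operators against step
functions.  `H` is the Hilbert space of `ℓ²`-sections over `X`, `χ y` the orthogonal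
projections of a Borel partition `{Z_y}` with `Z_y ⊆ B_r(pt y)`, `M y` multiplication by
the value `f(pt y)` of an `L`-Lipschitz function `f : X → B` (so
`‖M y − M z‖ ≤ L·dist (pt y) (pt z)`), which graded-commutes with `T` with sign `σ` and
commutes with the projections, `T` a bounded operator with `χ_y T χ_z = 0` for
`dist (pt y) (pt z) > p + 2r`, each point having at most `K` partners within `p + 2r`,
and `Fr = Σ_y M y χ_y` the multiplication operator by `f_r = Σ_y f(y) χ_{Z_y}`.
Then the graded commutator satisfies `‖[T, f_r]‖ ≤ K·‖T‖·L·(2r + p)`. -/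
theorem finite_propagation_commutator_estimate
    {H : Type*} [NormedAddCommGroup H] [InnerProductSpace ℂ H] [CompleteSpace H]
    {ι X : Type*} [Countable ι] [MetricSpace X] (pt : ι → X)
    (χ : ι → H →L[ℂ] H)
    (hproj : ∀ y, IsIdempotentElem (χ y) ∧ IsSelfAdjoint (χ y))
    (horth : ∀ y z, y ≠ z → (χ y) ∘L (χ z) = 0)
    (hcomplete : ∀ v : H, HasSum (fun y => χ y v) v)
    (M : ι → H →L[ℂ] H)
    (L r p : ℝ) (hL : 0 ≤ L) (hr : 0 < r) (hp : 0 ≤ p)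
    (hLip : ∀ y z, ‖M y - M z‖ ≤ L * dist (pt y) (pt z))
    (σ : ℂ) (hσ : σ = 1 ∨ σ = -1)
    (T : H →L[ℂ] H)
    (hTM : ∀ y, (M y) ∘L T = σ • (T ∘L (M y)))
    (hMχ : ∀ y z, (M y) ∘L (χ z) = (χ z) ∘L (M y))
    (hprop : ∀ y z, p + 2 * r < dist (pt y) (pt z) → (χ y) ∘L T ∘L (χ z) = 0)
    (K : ℕ)
    (hmul : ∀ y : ι, Set.Finite {z : ι | dist (pt y) (pt z) ≤ p + 2 * r} ∧
      Nat.card {z : ι | dist (pt y) (pt z) ≤ p + 2 * r} ≤ K)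
    (Fr : H →L[ℂ] H)
    (hFr : ∀ v : H, HasSum (fun y => (M y) ((χ y) v)) (Fr v)) :
    ‖T ∘L Fr - σ • (Fr ∘L T)‖ ≤ (K : ℝ) * ‖T‖ * L * (2 * r + p) :=
  finite_propagation_commutator_estimate_general pt χ hproj horth hcomplete M L r p hL hr hp hLip σ
    hσ T hTM hMχ hprop K hmul Fr hFr
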